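/- Let q ≥ 3, m ≥ 0 with q ≥ 2m+2, and let t = t(ρ) = √ρ/√(1−ρ) for ρ ∈ [0,1). Define S(ρ) = 2∫_0^∞ φ(z)·C(q,m+1)·(m+1)·[f(Φ(tz)) + f(1−Φ(tz))] dz, where f(θ) = ∑_{r=0}^m ((-1)^{m-r}/(q−r))·C(m,r)·θ^{q−r}. Then dS/dρ = 2∫_0^∞ z·φ(z)·φ(tz)·(dt/dρ)·C(q,m+1)·(m+1)·Φ(tz)^m·(1−Φ(tz))^m·[Φ(tz)^{q−2m−1} − (1−Φ(tz))^{q−2m−1}] dz, which is strictly positive for ρ ∈ (0,1). -/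

import Mathlib

open MeasureTheory Real Finset

/-- The standard normal density `φ`. -/
noncomputable def stdNormalPDF (x : ℝ) : ℝ :=
  (Real.sqrt (2 * Real.pi))⁻¹ * Real.exp (-x ^ 2 / 2)

/-- The standard normal cumulative distribution function `Φ`. -/
noncomputable def stdNormalCDF (x : ℝ) : ℝ :=
  ∫ t in Set.Iic x, stdNormalPDF t

/-- `f(θ) = ∑_{r=0}^m ((-1)^{m-r}/(q−r))·C(m,r)·θ^{q−r}`. -/
noncomputable def signTestPoly (q m : ℕ) (θ : ℝ) : ℝ :=
  ∑ r ∈ Finset.range (m + 1), ((-1 : ℝ) ^ (m - r) / ((q : ℝ) - r)) * (m.choose r : ℝ) * θ ^ (q - r)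

/-- `S(ρ) = 2∫_0^∞ φ(z)·C(q,m+1)·(m+1)·[f(Φ(t(ρ)z)) + f(1−Φ(t(ρ)z))] dz`
with `t(ρ) = √ρ/√(1−ρ)`. -/
noncomputable def signTestSize (q m : ℕ) (ρ : ℝ) : ℝ :=
  2 * ∫ z in Set.Ioi (0 : ℝ),
    stdNormalPDF z * (q.choose (m + 1) : ℝ) * ((m : ℝ) + 1) *
      (signTestPoly q m (stdNormalCDF (Real.sqrt ρ / Real.sqrt (1 - ρ) * z))
        + signTestPoly q m (1 - stdNormalCDF (Real.sqrt ρ / Real.sqrt (1 - ρ) * z)))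

/-! Put `G(θ) = f(θ) + f(1 - θ)`. Expanding `(1 - θ)^m` binomially gives
`f'(θ) = θ^(q-m-1) (1 - θ)^m`, hence
`G'(θ) = θ^m (1 - θ)^m (θ^(q-2m-1) - (1 - θ)^(q-2m-1))`.
Since `Φ` takes values in `[0, 1]` and `φ ≤ 1`, the `t`-derivative
`z φ(z) φ(tz) G'(Φ(tz))` of the integrand of `S` is dominated by a multiple of `|z| φ(z)`, so
one may differentiate under the integral sign and then compose with `t(ρ)`. For `z, t > 0` we have
`Φ(tz) > 1/2 > 1 - Φ(tz)`, so `G'(Φ(tz)) > 0` because `q - 2m - 1 ≥ 1`; together with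
`t'(ρ) > 0` the integrand is positive on `(0, ∞)`. -/

lemma stdNormalPDF_eq_gaussianPDFReal : stdNormalPDF = ProbabilityTheory.gaussianPDFReal 0 1 := by
  ext x
  simp [stdNormalPDF, ProbabilityTheory.gaussianPDFReal]

lemma stdNormalPDF_pos (x : ℝ) : 0 < stdNormalPDF x := by
  rw [stdNormalPDF_eq_gaussianPDFReal]
  exact ProbabilityTheory.gaussianPDFReal_pos _ _ _ one_ne_zero

lemma continuous_stdNormalPDF : Continuous stdNormalPDF := by
  unfold stdNormalPDF
  fun_prop

lemma integrable_stdNormalPDF : Integrable stdNormalPDF := by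
  rw [stdNormalPDF_eq_gaussianPDFReal]
  exact ProbabilityTheory.integrable_gaussianPDFReal _ _

lemma integral_stdNormalPDF : ∫ x, stdNormalPDF x = 1 := by
  rw [stdNormalPDF_eq_gaussianPDFReal]
  exact ProbabilityTheory.integral_gaussianPDFReal_eq_one _ one_ne_zero

lemma stdNormalPDF_neg (x : ℝ) : stdNormalPDF (-x) = stdNormalPDF x := by
  simp [stdNormalPDF]

lemma stdNormalPDF_le_one (x : ℝ) : stdNormalPDF x ≤ 1 := by
  have hexp : exp (-x ^ 2 / 2) ≤ 1 := exp_le_one_iff.2 (by nlinarith [sq_nonneg x])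
  have hsqrt : 1 ≤ √(2 * π) := one_le_sqrt.2 (by nlinarith [pi_gt_three])
  unfold stdNormalPDF
  exact mul_le_one₀ (inv_le_one_of_one_le₀ hsqrt) (exp_pos _).le hexp

lemma integrable_mul_stdNormalPDF : Integrable fun x => x * stdNormalPDF x := by
  have h := (integrable_mul_exp_neg_mul_sq (by norm_num : (0 : ℝ) < 1 / 2)).const_mul
    (√(2 * π))⁻¹
  refine h.congr (Filter.Eventually.of_forall fun x => ?_)
  simp only [stdNormalPDF]
  ring_nf

lemma hasDerivAt_stdNormalCDF (x : ℝ) : HasDerivAt stdNormalCDF (stdNormalPDF x) x := by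
  have h : stdNormalCDF = fun y => stdNormalCDF 0 + ∫ u in (0 : ℝ)..y, stdNormalPDF u := by
    funext y
    rw [← intervalIntegral.integral_Iic_sub_Iic integrable_stdNormalPDF.integrableOn
      integrable_stdNormalPDF.integrableOn, stdNormalCDF, stdNormalCDF]
    ring
  rw [h]
  exact (intervalIntegral.integral_hasDerivAt_right integrable_stdNormalPDF.intervalIntegrable
    (continuous_stdNormalPDF.stronglyMeasurableAtFilter _ _)
    continuous_stdNormalPDF.continuousAt).const_add _

lemma continuous_stdNormalCDF : Continuous stdNormalCDF :=
  continuous_iff_continuousAt.2 fun x => (hasDerivAt_stdNormalCDF x).continuousAt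

lemma strictMono_stdNormalCDF : StrictMono stdNormalCDF :=
  strictMono_of_deriv_pos fun x => (hasDerivAt_stdNormalCDF x).deriv ▸ stdNormalPDF_pos x

lemma stdNormalCDF_nonneg (x : ℝ) : 0 ≤ stdNormalCDF x :=
  setIntegral_nonneg measurableSet_Iic fun y _ => (stdNormalPDF_pos y).le

lemma stdNormalCDF_le_one (x : ℝ) : stdNormalCDF x ≤ 1 :=
  integral_stdNormalPDF ▸ setIntegral_le_integral integrable_stdNormalPDF
    (Filter.Eventually.of_forall fun y => (stdNormalPDF_pos y).le)

lemma stdNormalCDF_lt_one (x : ℝ) : stdNormalCDF x < 1 :=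
  (strictMono_stdNormalCDF (lt_add_one x)).trans_le (stdNormalCDF_le_one _)

lemma stdNormalCDF_zero : stdNormalCDF 0 = 1 / 2 := by
  have hsymm : ∫ y in Set.Ioi (0 : ℝ), stdNormalPDF y = stdNormalCDF 0 := by
    rw [stdNormalCDF, ← neg_zero, ← integral_comp_neg_Iic]
    simp only [stdNormalPDF_neg, neg_zero]
  have htotal := intervalIntegral.integral_Iic_add_Ioi (b := 0)
    integrable_stdNormalPDF.integrableOn integrable_stdNormalPDF.integrableOn
  rw [hsymm, integral_stdNormalPDF, ← stdNormalCDF] at htotal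
  linarith

lemma one_half_lt_stdNormalCDF {x : ℝ} (hx : 0 < x) : 1 / 2 < stdNormalCDF x :=
  stdNormalCDF_zero ▸ strictMono_stdNormalCDF hx

lemma stdNormalCDF_mem_Icc (x : ℝ) : stdNormalCDF x ∈ Set.Icc 0 1 :=
  ⟨stdNormalCDF_nonneg x, stdNormalCDF_le_one x⟩

lemma hasDerivAt_stdNormalPDF_mul_comp_stdNormalCDF {G G' : ℝ → ℝ}
    (hG : ∀ θ, HasDerivAt G (G' θ) θ) (z t : ℝ) :
    HasDerivAt (fun t => stdNormalPDF z * G (stdNormalCDF (t * z)))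
      (z * stdNormalPDF z * stdNormalPDF (t * z) * G' (stdNormalCDF (t * z))) t := by
  have hΦ : HasDerivAt (fun t => stdNormalCDF (t * z)) (stdNormalPDF (t * z) * z) t :=
    (hasDerivAt_stdNormalCDF _).comp t (hasDerivAt_mul_const z)
  refine (((hG _).comp t hΦ).const_mul (stdNormalPDF z)).congr_deriv ?_
  ring

theorem hasDerivAt_setIntegral_stdNormalPDF_mul_comp_stdNormalCDF {G G' : ℝ → ℝ}
    (hG : ∀ θ, HasDerivAt G (G' θ) θ) (hG' : Continuous G') (s : Set ℝ) (t₀ : ℝ) :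
    IntegrableOn
        (fun z => z * stdNormalPDF z * stdNormalPDF (t₀ * z) * G' (stdNormalCDF (t₀ * z))) s ∧
      HasDerivAt (fun t => ∫ z in s, stdNormalPDF z * G (stdNormalCDF (t * z)))
        (∫ z in s, z * stdNormalPDF z * stdNormalPDF (t₀ * z) * G' (stdNormalCDF (t₀ * z)))
        t₀ := by
  have hGc : Continuous G := continuous_iff_continuousAt.2 fun θ => (hG θ).continuousAt
  obtain ⟨C, hC⟩ := isCompact_Icc.exists_bound_of_continuousOn hGc.continuousOn
  obtain ⟨C', hC'⟩ := isCompact_Icc.exists_bound_of_continuousOn hG'.continuousOn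
  have hΦ : ∀ t, Continuous fun z : ℝ => stdNormalCDF (t * z) := fun t =>
    continuous_stdNormalCDF.comp (continuous_const_mul t)
  refine hasDerivAt_integral_of_dominated_loc_of_deriv_le Filter.univ_mem
    (F := fun t z => stdNormalPDF z * G (stdNormalCDF (t * z)))
    (F' := fun t z => z * stdNormalPDF z * stdNormalPDF (t * z) * G' (stdNormalCDF (t * z)))
    (bound := fun z => ‖z * stdNormalPDF z‖ * C')
    (Filter.Eventually.of_forall fun t =>
      (continuous_stdNormalPDF.mul (hGc.comp (hΦ t))).aestronglyMeasurable)
    ?_ ?_ ?_ ?_ ?_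
  · exact integrable_stdNormalPDF.integrableOn.mul_bdd (hGc.comp (hΦ t₀)).aestronglyMeasurable
      (Filter.Eventually.of_forall fun z => hC _ (stdNormalCDF_mem_Icc _))
  · exact (((continuous_id.mul continuous_stdNormalPDF).mul
      (continuous_stdNormalPDF.comp (continuous_const_mul t₀))).mul
      (hG'.comp (hΦ t₀))).aestronglyMeasurable
  · refine Filter.Eventually.of_forall fun z t _ => ?_
    rw [norm_mul, norm_mul _ (stdNormalPDF (t * z))]
    gcongr
    · exact mul_le_of_le_one_right (norm_nonneg _)
        ((norm_of_nonneg (stdNormalPDF_pos _).le).trans_le (stdNormalPDF_le_one _))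
    · exact hC' _ (stdNormalCDF_mem_Icc _)
  · exact (integrable_mul_stdNormalPDF.norm.mul_const C').integrableOn
  · exact Filter.Eventually.of_forall fun z t _ =>
      hasDerivAt_stdNormalPDF_mul_comp_stdNormalCDF hG z t

lemma hasDerivAt_signTestPoly {q m : ℕ} (hm : m < q) (θ : ℝ) :
    HasDerivAt (signTestPoly q m) (θ ^ (q - m - 1) * (1 - θ) ^ m) θ := by
  have hterm : ∀ r ∈ range (m + 1),
      HasDerivAt (fun θ => (-1 : ℝ) ^ (m - r) / ((q : ℝ) - r) * m.choose r * θ ^ (q - r))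
        ((-1 : ℝ) ^ (m - r) * m.choose r * θ ^ (q - r - 1)) θ := by
    intro r hr
    have hrq : r < q := by rw [mem_range] at hr; omega
    have hne : (q : ℝ) - r ≠ 0 := sub_ne_zero.2 (by exact_mod_cast hrq.ne')
    refine ((hasDerivAt_pow (q - r) θ).const_mul
      (((-1 : ℝ) ^ (m - r) / ((q : ℝ) - r)) * (m.choose r : ℝ))).congr_deriv ?_
    rw [Nat.cast_sub hrq.le]
    field_simp
  refine (HasDerivAt.fun_sum hterm).congr_deriv ?_
  rw [sub_eq_add_neg, add_pow, mul_sum]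
  refine sum_congr rfl fun r hr => ?_
  have hexp : q - m - 1 + (m - r) = q - r - 1 := by rw [mem_range] at hr; omega
  rw [one_pow, one_mul, neg_pow, ← hexp, pow_add]
  ring

lemma hasDerivAt_signTestPoly_add_signTestPoly_one_sub {q m : ℕ} (hm : 2 * m + 1 ≤ q)
    (θ : ℝ) :
    HasDerivAt (fun θ => signTestPoly q m θ + signTestPoly q m (1 - θ))
      (θ ^ m * (1 - θ) ^ m * (θ ^ (q - 2 * m - 1) - (1 - θ) ^ (q - 2 * m - 1))) θ := by
  have hmq : m < q := by omega
  have hreflect := (hasDerivAt_signTestPoly hmq (1 - θ)).comp θ ((hasDerivAt_id θ).const_sub 1)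
  refine ((hasDerivAt_signTestPoly hmq θ).add hreflect).congr_deriv ?_
  rw [show q - m - 1 = m + (q - 2 * m - 1) by omega, sub_sub_cancel]
  ring

lemma setIntegral_Ioi_pos {f : ℝ → ℝ} {a : ℝ} (hf : IntegrableOn f (Set.Ioi a))
    (hpos : ∀ x ∈ Set.Ioi a, 0 < f x) : 0 < ∫ x in Set.Ioi a, f x := by
  have hnonneg : 0 ≤ᵐ[volume.restrict (Set.Ioi a)] f :=
    (ae_restrict_iff' measurableSet_Ioi).2 (Filter.Eventually.of_forall fun x hx => (hpos x hx).le)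
  rw [setIntegral_pos_iff_support_of_nonneg_ae hnonneg hf]
  calc (0 : ENNReal) < volume (Set.Ioi a) := by simp
    _ ≤ volume (Function.support f ∩ Set.Ioi a) :=
      measure_mono fun x hx => ⟨(hpos x hx).ne', hx⟩

lemma pow_mul_pow_mul_sub_pow_pos {θ : ℝ} (hθ₀ : 1 / 2 < θ) (hθ₁ : θ < 1) (m : ℕ)
    {k : ℕ} (hk : k ≠ 0) : 0 < θ ^ m * (1 - θ) ^ m * (θ ^ k - (1 - θ) ^ k) := by
  have hlt : (1 - θ) ^ k < θ ^ k := pow_lt_pow_left₀ (by linarith) (by linarith) hk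
  have : 0 < θ ^ m * (1 - θ) ^ m := mul_pos (pow_pos (by linarith) m) (pow_pos (by linarith) m)
  nlinarith

lemma pos_of_hasDerivAt_sqrt_div_sqrt_one_sub {ρ t' : ℝ} (hρ₀ : 0 < ρ) (hρ₁ : ρ < 1)
    (ht' : HasDerivAt (fun s : ℝ => √s / √(1 - s)) t' ρ) : 0 < t' := by
  have hs₀ : 0 < √ρ := sqrt_pos.2 hρ₀
  have hs₁ : 0 < √(1 - ρ) := sqrt_pos.2 (by linarith)
  have hden := (hasDerivAt_sqrt (by linarith : (1 : ℝ) - ρ ≠ 0)).comp ρ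
    ((hasDerivAt_id ρ).const_sub 1)
  have hdiv := (hasDerivAt_sqrt hρ₀.ne').div hden hs₁.ne'
  rw [ht'.unique hdiv]
  simp only [Function.comp_apply, mul_neg, sub_neg_eq_add]
  positivity

lemma mul_stdNormalPDF_mul_comp_stdNormalCDF_pos {G' : ℝ → ℝ}
    (hG' : ∀ θ, 1 / 2 < θ → θ < 1 → 0 < G' θ) {t z : ℝ} (ht : 0 < t) (hz : 0 < z) :
    0 < z * stdNormalPDF z * stdNormalPDF (t * z) * G' (stdNormalCDF (t * z)) :=
  mul_pos (mul_pos (mul_pos hz (stdNormalPDF_pos z)) (stdNormalPDF_pos _))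
    (hG' _ (one_half_lt_stdNormalCDF (mul_pos ht hz)) (stdNormalCDF_lt_one _))

theorem sign_test_size_strictly_increasing_general (q m : ℕ) (hm : 2 * m + 2 ≤ q)
    (ρ : ℝ) (hρ0 : 0 < ρ) (hρ1 : ρ < 1) (t' : ℝ)
    (ht' : HasDerivAt (fun s : ℝ => Real.sqrt s / Real.sqrt (1 - s)) t' ρ) :
    HasDerivAt (signTestSize q m)
      (2 * ∫ z in Set.Ioi (0 : ℝ),
        z * stdNormalPDF z * stdNormalPDF (Real.sqrt ρ / Real.sqrt (1 - ρ) * z) * t' *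
          (q.choose (m + 1) : ℝ) * ((m : ℝ) + 1) *
          (stdNormalCDF (Real.sqrt ρ / Real.sqrt (1 - ρ) * z)) ^ m *
          (1 - stdNormalCDF (Real.sqrt ρ / Real.sqrt (1 - ρ) * z)) ^ m *
          ((stdNormalCDF (Real.sqrt ρ / Real.sqrt (1 - ρ) * z)) ^ (q - 2 * m - 1)
            - (1 - stdNormalCDF (Real.sqrt ρ / Real.sqrt (1 - ρ) * z)) ^ (q - 2 * m - 1))) ρ
    ∧ 0 < 2 * ∫ z in Set.Ioi (0 : ℝ),
        z * stdNormalPDF z * stdNormalPDF (Real.sqrt ρ / Real.sqrt (1 - ρ) * z) * t' *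
          (q.choose (m + 1) : ℝ) * ((m : ℝ) + 1) *
          (stdNormalCDF (Real.sqrt ρ / Real.sqrt (1 - ρ) * z)) ^ m *
          (1 - stdNormalCDF (Real.sqrt ρ / Real.sqrt (1 - ρ) * z)) ^ m *
          ((stdNormalCDF (Real.sqrt ρ / Real.sqrt (1 - ρ) * z)) ^ (q - 2 * m - 1)
            - (1 - stdNormalCDF (Real.sqrt ρ / Real.sqrt (1 - ρ) * z)) ^ (q - 2 * m - 1)) := by
  set c : ℝ := (q.choose (m + 1) : ℝ) * ((m : ℝ) + 1)
  set t₀ := Real.sqrt ρ / Real.sqrt (1 - ρ)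
  have ht₀ : 0 < t₀ := div_pos (sqrt_pos.2 hρ0) (sqrt_pos.2 (by linarith))
  have hc : 0 < c := mul_pos (by exact_mod_cast Nat.choose_pos (by omega)) (by positivity)
  obtain ⟨hint, hderiv⟩ := hasDerivAt_setIntegral_stdNormalPDF_mul_comp_stdNormalCDF
    (fun θ => (hasDerivAt_signTestPoly_add_signTestPoly_one_sub (q := q) (m := m)
      (by omega) θ).const_mul c) (by fun_prop) (Set.Ioi 0) t₀
  have hintegral_pos := setIntegral_Ioi_pos hint fun z hz =>
    mul_stdNormalPDF_mul_comp_stdNormalCDF_pos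
      (fun θ h₀ h₁ => mul_pos hc (pow_mul_pow_mul_sub_pow_pos h₀ h₁ m (by omega))) ht₀ hz
  refine ⟨(((hderiv.const_mul 2).comp ρ ht').congr_of_eventuallyEq
    (Filter.Eventually.of_forall fun ρ' => ?_)).congr_deriv ?_, ?_⟩
  · simp only [signTestSize, Function.comp_apply, c, mul_assoc]
  · rw [mul_assoc, ← integral_mul_const]
    congr 2 with z
    ring
  · refine (mul_pos two_pos (mul_pos hintegral_pos
      (pos_of_hasDerivAt_sqrt_div_sqrt_one_sub hρ0 hρ1 ht'))).trans_eq ?_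
    rw [← integral_mul_const]
    congr 2 with z
    ring

/-- For `q ≥ 3`, `q ≥ 2m+2` and `ρ ∈ (0,1)`, with `t = t(ρ) = √ρ/√(1−ρ)` and `t'` its
derivative at `ρ`, the function `S` has derivative at `ρ` equal to
`2∫_0^∞ z·φ(z)·φ(tz)·t'·C(q,m+1)·(m+1)·Φ(tz)^m·(1−Φ(tz))^m·[Φ(tz)^{q−2m−1} − (1−Φ(tz))^{q−2m−1}] dz`,
and this quantity is strictly positive. -/
theorem sign_test_size_strictly_increasing (q m : ℕ) (hq : 3 ≤ q) (hm : 2 * m + 2 ≤ q)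
    (ρ : ℝ) (hρ0 : 0 < ρ) (hρ1 : ρ < 1) (t' : ℝ)
    (ht' : HasDerivAt (fun s : ℝ => Real.sqrt s / Real.sqrt (1 - s)) t' ρ) :
    HasDerivAt (signTestSize q m)
      (2 * ∫ z in Set.Ioi (0 : ℝ),
        z * stdNormalPDF z * stdNormalPDF (Real.sqrt ρ / Real.sqrt (1 - ρ) * z) * t' *
          (q.choose (m + 1) : ℝ) * ((m : ℝ) + 1) *
          (stdNormalCDF (Real.sqrt ρ / Real.sqrt (1 - ρ) * z)) ^ m *
          (1 - stdNormalCDF (Real.sqrt ρ / Real.sqrt (1 - ρ) * z)) ^ m *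
          ((stdNormalCDF (Real.sqrt ρ / Real.sqrt (1 - ρ) * z)) ^ (q - 2 * m - 1)
            - (1 - stdNormalCDF (Real.sqrt ρ / Real.sqrt (1 - ρ) * z)) ^ (q - 2 * m - 1))) ρ
    ∧ 0 < 2 * ∫ z in Set.Ioi (0 : ℝ),
        z * stdNormalPDF z * stdNormalPDF (Real.sqrt ρ / Real.sqrt (1 - ρ) * z) * t' *
          (q.choose (m + 1) : ℝ) * ((m : ℝ) + 1) *
          (stdNormalCDF (Real.sqrt ρ / Real.sqrt (1 - ρ) * z)) ^ m *
          (1 - stdNormalCDF (Real.sqrt ρ / Real.sqrt (1 - ρ) * z)) ^ m *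
          ((stdNormalCDF (Real.sqrt ρ / Real.sqrt (1 - ρ) * z)) ^ (q - 2 * m - 1)
            - (1 - stdNormalCDF (Real.sqrt ρ / Real.sqrt (1 - ρ) * z)) ^ (q - 2 * m - 1)) :=
  sign_test_size_strictly_increasing_general q m hm ρ hρ0 hρ1 t' ht'
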